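/- arXiv:2605.11791 — 3 statements merged into one kernel-verified Lean document; each statement's English description precedes it below -/
import Mathlib

section
/- Let r > 0 and let f be a function holomorphic on an open neighborhood of the closed disc {z ∈ ℂ : |z| ≤ r}, and let g be a continuous function on the closed disc {z : |z| ≤ r} such that |f(z)| > |g(z)| for all z with |z| = r. If there exists z₀ with |z₀| < r and f(z₀) = 0, then there exists z' with |z'| < r such that f(z') = g(z'). -/
/-!
If `f ≠ g` throughout the open disc, then `f - g` vanishes nowhere on the closed disc, which is
simply connected, so `f - g` has a continuous logarithm there. On the boundary circle
`‖(f - g) - f‖ = ‖g‖ < ‖f‖`, so `f / (f - g)` takes values in the slit plane and `f` inherits a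
continuous logarithm on the circle. On the other hand, dividing out the zeros `a` of `f` in the disc
one at a time, using `z - a = z (1 - a / z)` with `1 - a / z` in the slit plane on the circle,
writes `f = z ^ k * exp L` there with `k ≥ 1`; and `z ^ k` has no continuous logarithm on a circle,
since its argument grows by `2πk` once around it.
-/

open Metric Set Topology

section ContinuousLog

variable {X : Type*} [TopologicalSpace X] {f g : X → ℂ} {s t : Set X}

def HasContinuousLogOn (f : X → ℂ) (s : Set X) : Prop :=
  ∃ L : X → ℂ, ContinuousOn L s ∧ EqOn (Complex.exp ∘ L) f s

namespace HasContinuousLogOn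

theorem mono (hf : HasContinuousLogOn f s) (hts : t ⊆ s) : HasContinuousLogOn f t :=
  let ⟨L, hL, hexp⟩ := hf
  ⟨L, hL.mono hts, hexp.mono hts⟩

theorem congr (hf : HasContinuousLogOn f s) (hfg : EqOn f g s) : HasContinuousLogOn g s :=
  let ⟨L, hL, hexp⟩ := hf
  ⟨L, hL, hexp.trans hfg⟩

theorem continuousOn (hf : HasContinuousLogOn f s) : ContinuousOn f s :=
  let ⟨_, hL, hexp⟩ := hf
  (Complex.continuous_exp.comp_continuousOn hL).congr hexp.symm

theorem ne_zero (hf : HasContinuousLogOn f s) {x : X} (hx : x ∈ s) : f x ≠ 0 :=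
  let ⟨_, _, hexp⟩ := hf
  hexp hx ▸ Complex.exp_ne_zero _

theorem mul (hf : HasContinuousLogOn f s) (hg : HasContinuousLogOn g s) :
    HasContinuousLogOn (f * g) s :=
  let ⟨L, hL, hexpL⟩ := hf
  let ⟨M, hM, hexpM⟩ := hg
  ⟨L + M, hL.add hM, fun x hx => by simp [Complex.exp_add, ← hexpL hx, ← hexpM hx]⟩

theorem div (hf : HasContinuousLogOn f s) (hg : HasContinuousLogOn g s) :
    HasContinuousLogOn (f / g) s :=
  let ⟨L, hL, hexpL⟩ := hf
  let ⟨M, hM, hexpM⟩ := hg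
  ⟨L - M, hL.sub hM, fun x hx => by simp [Complex.exp_sub, ← hexpL hx, ← hexpM hx]⟩

theorem pow (hf : HasContinuousLogOn f s) (n : ℕ) : HasContinuousLogOn (f ^ n) s :=
  let ⟨L, hL, hexpL⟩ := hf
  ⟨n * L, continuousOn_const.mul hL, fun x hx => by simp [Complex.exp_nat_mul, ← hexpL hx]⟩

end HasContinuousLogOn

theorem ContinuousOn.hasContinuousLogOn_of_mapsTo_slitPlane (hf : ContinuousOn f s)
    (hs : MapsTo f s Complex.slitPlane) : HasContinuousLogOn f s :=
  ⟨fun x => Complex.log (f x), hf.clog hs,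
    fun _ hx => Complex.exp_log (Complex.slitPlane_ne_zero (hs hx))⟩

theorem HasContinuousLogOn.of_norm_sub_lt (hf : HasContinuousLogOn f s) (hg : ContinuousOn g s)
    (hfg : ∀ x ∈ s, ‖f x - g x‖ < ‖g x‖) : HasContinuousLogOn g s := by
  have hg0 : ∀ x ∈ s, g x ≠ 0 := fun x hx h =>
    (norm_nonneg (f x - g x)).not_gt (by simpa [h] using hfg x hx)
  have hquot : HasContinuousLogOn (f / g) s := by
    refine (hf.continuousOn.div hg hg0).hasContinuousLogOn_of_mapsTo_slitPlane fun x hx => ?_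
    have : ‖(f x - g x) / g x‖ < 1 := by
      rw [norm_div, div_lt_one (norm_pos_iff.2 (hg0 x hx))]
      exact hfg x hx
    convert Complex.mem_slitPlane_of_norm_lt_one this using 1
    rw [Pi.div_apply]
    field_simp [hg0 x hx]
    ring
  refine (hf.div hquot).congr fun x hx => ?_
  simp [hf.ne_zero hx]

theorem Convex.hasContinuousLogOn {E : Type*} [NormedAddCommGroup E] [NormedSpace ℝ E]
    {s : Set E} {f : E → ℂ} (hs : Convex ℝ s) (hf : ContinuousOn f s) (hf0 : ∀ x ∈ s, f x ≠ 0) :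
    HasContinuousLogOn f s := by
  rcases s.eq_empty_or_nonempty with rfl | ⟨x₀, hx₀⟩
  · exact ⟨0, continuousOn_empty _, fun _ h => h.elim⟩
  have := hs.contractibleSpace ⟨x₀, hx₀⟩
  have := hs.locallyPathConnectedSpace
  obtain ⟨L, ⟨-, hL⟩, -⟩ := Complex.isCoveringMapOn_exp.existsUnique_continuousMap_lifts
    ⟨s.domRestrict f, hf.domRestrict⟩ (Complex.exp_log (hf0 x₀ hx₀)) (a₀ := ⟨x₀, hx₀⟩)
    fun x => hf0 x x.2
  classical
  refine ⟨fun x => if hx : x ∈ s then L ⟨x, hx⟩ else 0, ?_, fun x hx => ?_⟩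
  · rw [continuousOn_iff_continuous_domRestrict]
    convert L.continuous with x
    simp
  · simpa [hx] using congrFun hL ⟨x, hx⟩

open Complex in
theorem not_hasContinuousLogOn_pow_sphere {r : ℝ} (hr : 0 < r) {n : ℕ} (hn : n ≠ 0) :
    ¬HasContinuousLogOn (· ^ n) (sphere (0 : ℂ) r) := by
  rintro ⟨L, hL, hexp⟩
  set φ : ℝ → ℂ := fun t => L (circleMap 0 r t) - n * (Complex.log r + t * I) with hφ
  have hφc : Continuous φ := by
    refine (hL.comp_continuous (continuous_circleMap 0 r) (circleMap_mem_sphere 0 hr.le)).sub ?_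
    fun_prop
  have hφ_mem : ∀ t, φ t ∈ (AddSubgroup.zmultiples (2 * Real.pi * I) : Set ℂ) := by
    intro t
    have hc : circleMap 0 r t ≠ 0 := circleMap_ne_center hr.ne'
    have h1 : exp (L (circleMap 0 r t)) = circleMap 0 r t ^ n :=
      hexp (circleMap_mem_sphere 0 hr.le t)
    have h2 : exp (n * (Complex.log r + t * I)) = circleMap 0 r t ^ n := by
      rw [Complex.exp_nat_mul, Complex.exp_add, exp_log (by exact_mod_cast hr.ne'), circleMap_zero]
    obtain ⟨k, hk⟩ := (exp_eq_one_iff (x := φ t)).1 <| by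
      rw [hφ]; dsimp only; rw [exp_sub, h1, h2, div_self (pow_ne_zero _ hc)]
    exact AddSubgroup.mem_zmultiples_iff.2 ⟨k, by simp [hk]⟩
  -- `φ` is continuous with values in the discrete set `2πiℤ`, but one turn shifts it by `2πin`.
  have hconst : φ (2 * Real.pi) = φ 0 :=
    isPreconnected_univ.constant_of_mapsTo
      (isDiscrete_iff_discreteTopology.2 (NormedSpace.discreteTopology_zmultiples _))
      hφc.continuousOn (fun t _ => hφ_mem t) trivial trivial
  simp only [hφ, (periodic_circleMap 0 r).eq] at hconst
  have : (n : ℂ) * (2 * Real.pi * I) = 0 := by push_cast at hconst; linear_combination -hconst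
  simp [hn, Real.pi_ne_zero, I_ne_zero] at this

theorem hasContinuousLogOn_one_sub_div_sphere {a : ℂ} {r : ℝ} (ha : ‖a‖ < r) :
    HasContinuousLogOn (fun z => 1 - a / z) (sphere 0 r) := by
  have hr : 0 < r := (norm_nonneg a).trans_lt ha
  have hz0 : ∀ z ∈ sphere (0 : ℂ) r, z ≠ 0 := fun z hz => ne_zero_of_mem_sphere hr.ne' ⟨z, hz⟩
  refine (continuousOn_const.sub (continuousOn_const.div continuousOn_id hz0))
    |>.hasContinuousLogOn_of_mapsTo_slitPlane fun z hz => ?_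
  have : ‖-(a / z)‖ < 1 := by
    rw [norm_neg, norm_div, mem_sphere_zero_iff_norm.1 hz, div_lt_one hr]
    exact ha
  simpa [sub_eq_add_neg] using Complex.mem_slitPlane_of_norm_lt_one this

end ContinuousLog

section IsolatedZeros

variable {𝕜 E : Type*} [NontriviallyNormedField 𝕜] [NormedAddCommGroup E] [NormedSpace 𝕜 E]
  {f : 𝕜 → E} {s : Set 𝕜} {a : 𝕜}

theorem AnalyticOnNhd.exists_eq_pow_smul (hf : AnalyticOnNhd 𝕜 f s) (ha : a ∈ s)
    (hfa : ¬∀ᶠ z in 𝓝 a, f z = 0) :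
    ∃ (n : ℕ) (q : 𝕜 → E), AnalyticOnNhd 𝕜 q s ∧ q a ≠ 0 ∧ ∀ z, f z = (z - a) ^ n • q z := by
  obtain ⟨p, hp⟩ := hf a ha
  refine ⟨p.order, _, fun z hz => ?_,
    hp.iterate_dslope_fslope_ne_zero fun h => hfa (hp.locally_zero_iff.2 h),
    hp.eq_pow_order_mul_iterate_dslope⟩
  rcases eq_or_ne z a with rfl | hza
  · exact ⟨_, hp.has_fpower_series_iterate_dslope_fslope p.order⟩
  have hquot : AnalyticAt 𝕜 (fun w => ((w - a) ^ p.order)⁻¹ • f w) z :=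
    (((analyticAt_id.sub analyticAt_const).pow _).inv
      (pow_ne_zero _ (sub_ne_zero.2 hza))).smul (hf z hz)
  refine hquot.congr ?_
  filter_upwards [eventually_ne_nhds hza] with w hw
  rw [hp.eq_pow_order_mul_iterate_dslope w, smul_smul,
    inv_mul_cancel₀ (pow_ne_zero _ (sub_ne_zero.2 hw)), one_smul]

theorem AnalyticOnNhd.finite_inter_preimage_zero (hf : AnalyticOnNhd 𝕜 f s) (hs : IsCompact s)
    (hs' : IsConnected s) {x : 𝕜} (hx : x ∈ s) (hfx : f x ≠ 0) : (s ∩ f ⁻¹' {0}).Finite := by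
  simpa [sdiff_compl] using
    hs.finite_sdiff_of_mem_codiscreteWithin (hf.preimage_zero_mem_codiscreteWithin hfx hx hs')

end IsolatedZeros

section ArgumentPrinciple

variable {f : ℂ → ℂ} {r : ℝ}

theorem AnalyticOnNhd.exists_hasContinuousLogOn_div_pow_of_zeros_subset
    (hf : AnalyticOnNhd ℂ f (closedBall 0 r)) (hf_sphere : ∀ z ∈ sphere 0 r, f z ≠ 0)
    {S : Set ℂ} (hS : S.Finite) (hzeros : closedBall 0 r ∩ f ⁻¹' {0} ⊆ S) :
    ∃ k : ℕ, ((∃ z ∈ ball 0 r, f z = 0) → 0 < k) ∧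
      HasContinuousLogOn (fun z => f z / z ^ k) (sphere 0 r) := by
  induction S, hS using Set.Finite.induction_on generalizing f with
  | empty =>
    refine ⟨0, fun ⟨z, hz, hfz⟩ => (hzeros ⟨ball_subset_closedBall hz, hfz⟩).elim, ?_⟩
    simp only [pow_zero, div_one]
    exact ((convex_closedBall 0 r).hasContinuousLogOn hf.continuousOn
      fun z hz hfz => hzeros ⟨hz, hfz⟩).mono sphere_subset_closedBall
  | @insert a S _ _ ih =>
    by_cases hfa : a ∈ closedBall 0 r ∧ f a = 0
    swap
    · refine ih hf hf_sphere fun z hz => (hzeros hz).resolve_left ?_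
      rintro rfl
      exact hfa hz
    obtain ⟨ha, hfa⟩ := hfa
    have ha_ball : a ∈ ball 0 r :=
      closedBall_sdiff_sphere (x := (0 : ℂ)) ▸ ⟨ha, fun h => hf_sphere a h hfa⟩
    have hr : 0 < r := pos_of_mem_ball ha_ball
    obtain ⟨w, hw⟩ := (NormedSpace.sphere_nonempty (E := ℂ) (x := 0)).2 hr.le
    have hf_ne : ¬∀ᶠ z in 𝓝 a, f z = 0 := fun hev => hf_sphere w hw <|
      hf.eqOn_zero_of_preconnected_of_eventuallyEq_zero (convex_closedBall 0 r).isPreconnected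
        ha hev (sphere_subset_closedBall hw)
    obtain ⟨m, q, hq, hqa, hfq⟩ := hf.exists_eq_pow_smul ha hf_ne
    simp only [smul_eq_mul] at hfq
    have hm : 0 < m := Nat.pos_of_ne_zero fun hm => hqa (by simpa [hm, hfa] using (hfq a).symm)
    obtain ⟨k, -, hk⟩ := ih hq (fun z hz hqz => hf_sphere z hz (by simp [hfq z, hqz]))
      fun z ⟨hz, (hqz : q z = 0)⟩ => (hzeros ⟨hz, by simp [hfq z, hqz]⟩).resolve_left
        (by rintro rfl; exact hqa hqz)
    refine ⟨m + k, fun _ => by omega, ?_⟩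
    refine (((hasContinuousLogOn_one_sub_div_sphere (mem_ball_zero_iff.1 ha_ball)).pow m).mul
      hk).congr fun z hz => ?_
    have hz0 : z ≠ 0 := ne_zero_of_mem_sphere hr.ne' ⟨z, hz⟩
    simp only [Pi.mul_apply, Pi.pow_apply, hfq z, one_sub_div hz0, div_pow, pow_add]
    field_simp

theorem AnalyticOnNhd.not_hasContinuousLogOn_sphere (hf : AnalyticOnNhd ℂ f (closedBall 0 r))
    (hf_sphere : ∀ z ∈ sphere 0 r, f z ≠ 0) {z₀ : ℂ} (hz₀ : z₀ ∈ ball 0 r) (hfz₀ : f z₀ = 0) :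
    ¬HasContinuousLogOn f (sphere 0 r) := by
  have hr : 0 < r := pos_of_mem_ball hz₀
  obtain ⟨w, hw⟩ := (NormedSpace.sphere_nonempty (E := ℂ) (x := 0)).2 hr.le
  have hfin := hf.finite_inter_preimage_zero (isCompact_closedBall 0 r)
    ((convex_closedBall 0 r).isConnected (nonempty_closedBall.2 hr.le))
    (sphere_subset_closedBall hw) (hf_sphere w hw)
  obtain ⟨k, hk, hlog⟩ := hf.exists_hasContinuousLogOn_div_pow_of_zeros_subset hf_sphere hfin
    subset_rfl
  intro hflog
  refine not_hasContinuousLogOn_pow_sphere hr (hk ⟨z₀, hz₀, hfz₀⟩).ne'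
    ((hflog.div hlog).congr fun z hz => ?_)
  have hz0 : z ≠ 0 := ne_zero_of_mem_sphere hr.ne' ⟨z, hz⟩
  simp only [Pi.div_apply]
  field_simp [hf_sphere z hz]

end ArgumentPrinciple

theorem rouche_type_analytic_continuous_general
    (r : ℝ) (f g : ℂ → ℂ)
    (U : Set ℂ) (hU : IsOpen U) (hUr : closedBall (0 : ℂ) r ⊆ U)
    (hf : DifferentiableOn ℂ f U)
    (hg : ContinuousOn g (closedBall (0 : ℂ) r))
    (hfg : ∀ z : ℂ, ‖z‖ = r → ‖g z‖ < ‖f z‖)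
    (z₀ : ℂ) (hz₀ : ‖z₀‖ < r) (hfz₀ : f z₀ = 0) :
    ∃ z' : ℂ, ‖z'‖ < r ∧ f z' = g z' := by
  by_contra! hfg_ne
  have hfa : AnalyticOnNhd ℂ f (closedBall 0 r) := (hf.analyticOnNhd hU).mono hUr
  have hf_sphere : ∀ z ∈ sphere (0 : ℂ) r, f z ≠ 0 := fun z hz =>
    norm_pos_iff.1 ((norm_nonneg _).trans_lt (hfg z (mem_sphere_zero_iff_norm.1 hz)))
  have hsub_ne : ∀ z ∈ closedBall (0 : ℂ) r, (f - g) z ≠ 0 := fun z hz h => by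
    rcases (mem_closedBall_zero_iff.1 hz).lt_or_eq with hz | hz
    · exact hfg_ne z hz (sub_eq_zero.1 h)
    · exact (hfg z hz).ne (by rw [sub_eq_zero.1 h])
  have hlog_sub : HasContinuousLogOn (f - g) (sphere 0 r) :=
    ((convex_closedBall 0 r).hasContinuousLogOn (hfa.continuousOn.sub hg) hsub_ne).mono
      sphere_subset_closedBall
  refine hfa.not_hasContinuousLogOn_sphere hf_sphere (mem_ball_zero_iff.2 hz₀) hfz₀ <|
    hlog_sub.of_norm_sub_lt (hfa.continuousOn.mono sphere_subset_closedBall) fun z hz => ?_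
  simpa using hfg z (mem_sphere_zero_iff_norm.1 hz)

/-- Rouché-type theorem where only one function is analytic: if `f` is holomorphic on a
neighborhood of the closed disc of radius `r`, `g` is continuous on the closed disc,
`|f| > |g|` on the boundary circle, and `f` has a zero in the open disc, then `f` and `g`
coincide somewhere in the open disc. -/
theorem rouche_type_analytic_continuous
    (r : ℝ) (hr : 0 < r) (f g : ℂ → ℂ)
    (U : Set ℂ) (hU : IsOpen U) (hUr : closedBall (0 : ℂ) r ⊆ U)
    (hf : DifferentiableOn ℂ f U)
    (hg : ContinuousOn g (closedBall (0 : ℂ) r))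
    (hfg : ∀ z : ℂ, ‖z‖ = r → ‖g z‖ < ‖f z‖)
    (z₀ : ℂ) (hz₀ : ‖z₀‖ < r) (hfz₀ : f z₀ = 0) :
    ∃ z' : ℂ, ‖z'‖ < r ∧ f z' = g z' :=
  rouche_type_analytic_continuous_general r f g U hU hUr hf hg hfg z₀ hz₀ hfz₀
end

section
/- Let D ⊆ ℂ be open, let (fₙ) be a sequence of continuous functions on D converging locally uniformly to a function f on D, let (zₙ) be a sequence in D converging to z₀ ∈ D, let (ρₙ) be a sequence of positive reals converging to 0, and let (gₙ) be a sequence of holomorphic functions on D such that the rescaled functions Gₙ(ξ) = gₙ(zₙ + ρₙξ) converge locally uniformly on ℂ to a nonconstant entire function g : ℂ → ℂ. If for each n, gₙ(z) ≠ fₙ(z) for all z ∈ D, then g(ξ) ≠ f(z₀) for all ξ ∈ ℂ. -/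
/-!
Suppose `g ξ₀ = f z₀`. Since `g` is nonconstant, `g - f z₀` has a zero of some order `k ≥ 1`
at `ξ₀`, isolated on a closed disc `B` around `ξ₀`. On `B` the rescaled differences
`gₙ(zₙ + ρₙ ξ) - fₙ(zₙ + ρₙ ξ)` converge uniformly to `g - f z₀`, because `zₙ + ρₙ B` shrinks
to `z₀`. For large `n` they are therefore closer to `g - f z₀` than `|g - f z₀|` on `∂B`, and a
continuous form of Rouché's theorem forces them to vanish in `B`: a zero-free continuous function
has a continuous logarithm on the disc, which would give a continuous logarithm of `(ξ - ξ₀)^k`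
on the circle `∂B`. That contradicts `gₙ ≠ fₙ`.
-/

open Metric Filter Topology Set Complex

theorem ContinuousMap.exists_exp_eq {A : Type*} [TopologicalSpace A] [SimplyConnectedSpace A]
    [LocallyPathConnectedSpace A] (φ : C(A, ℂ)) (hφ : ∀ a, φ a ≠ 0) :
    ∃ L : C(A, ℂ), ∀ a, exp (L a) = φ a := by
  obtain ⟨a₀⟩ : Nonempty A := inferInstance
  obtain ⟨L, ⟨-, hL⟩, -⟩ := Complex.isCoveringMapOn_exp.existsUnique_continuousMap_lifts φ
    (e₀ := log (φ a₀)) (exp_log (hφ a₀)) hφ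
  exact ⟨L, congrFun hL⟩

theorem Convex.exists_continuousOn_exp_eq {S : Set ℂ} (hS : Convex ℝ S) {φ : ℂ → ℂ}
    (hφ : ContinuousOn φ S) (h0 : ∀ ξ ∈ S, φ ξ ≠ 0) :
    ∃ L : ℂ → ℂ, ContinuousOn L S ∧ ∀ ξ ∈ S, exp (L ξ) = φ ξ := by
  rcases S.eq_empty_or_nonempty with rfl | hne
  · exact ⟨0, continuousOn_empty _, by simp⟩
  have := hS.contractibleSpace hne
  have := hS.locallyPathConnectedSpace
  obtain ⟨L, hL⟩ := ContinuousMap.exists_exp_eq ⟨S.domRestrict φ, hφ.domRestrict⟩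
    fun ξ => h0 ξ ξ.2
  classical
  refine ⟨fun ξ => if h : ξ ∈ S then L ⟨ξ, h⟩ else 0, ?_,
    fun ξ hξ => by simpa [hξ] using hL ⟨ξ, hξ⟩⟩
  rw [continuousOn_iff_continuous_domRestrict]
  convert L.continuous using 1
  ext ξ
  simp [ξ.2]

theorem not_forall_exp_eq_sub_pow_on_sphere (c : ℂ) {r : ℝ} (hr : 0 < r) {k : ℕ} (hk : k ≠ 0)
    {H : ℂ → ℂ} (hH : ContinuousOn H (sphere c r)) :
    ¬ ∀ ξ ∈ sphere c r, exp (H ξ) = (ξ - c) ^ k := by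
  intro hexp
  -- along the circle, `H` minus a branch of `k·arg` is a continuous lift of a constant,
  -- so it stays constant; going once around forces `2πik = 0`
  set q : ℝ → ℂ := fun θ => H (circleMap c r θ) - k * (θ * I) - H (circleMap c r 0)
  have hq : Continuous q := by
    have := hH.comp_continuous (continuous_circleMap c r) (circleMap_mem_sphere c hr.le)
    exact (this.sub (by fun_prop)).sub continuous_const
  have hq_mem : ∀ θ, q θ ∈ AddSubgroup.zmultiples (2 * Real.pi * I) := by
    intro θ
    have h1 : exp (q θ) = 1 := by
      simp only [q, exp_sub, hexp _ (circleMap_mem_sphere c hr.le _), circleMap_sub_center,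
        circleMap_zero, exp_nat_mul, ofReal_zero, zero_mul, exp_zero, mul_one, mul_pow]
      field_simp [pow_ne_zero k (ofReal_ne_zero.2 hr.ne'), pow_ne_zero k (exp_ne_zero (θ * I))]
    obtain ⟨n, hn⟩ := exp_eq_one_iff.1 h1
    exact ⟨n, by simp [hn]⟩
  have := isPreconnected_univ.constant_of_mapsTo
    (isDiscrete_iff_discreteTopology.2 (NormedSpace.discreteTopology_zmultiples _)) hq.continuousOn
    (fun θ _ => hq_mem θ) (mem_univ (2 * Real.pi)) (mem_univ 0)
  simp [q, (periodic_circleMap c r).eq, Real.pi_ne_zero, hk] at this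

theorem exists_zero_of_norm_sub_lt_pow_mul {c : ℂ} {r : ℝ} (hr : 0 < r) {k : ℕ} (hk : k ≠ 0)
    {v φ : ℂ → ℂ} (hv : ContinuousOn v (closedBall c r)) (hv0 : ∀ ξ ∈ closedBall c r, v ξ ≠ 0)
    (hφ : ContinuousOn φ (closedBall c r))
    (hclose : ∀ ξ ∈ sphere c r, ‖φ ξ - (ξ - c) ^ k * v ξ‖ < ‖(ξ - c) ^ k * v ξ‖) :
    ∃ ξ ∈ closedBall c r, φ ξ = 0 := by
  by_contra! hφ0
  have hsub : sphere c r ⊆ closedBall c r := sphere_subset_closedBall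
  obtain ⟨Lφ, hLφ, hφexp⟩ := (convex_closedBall c r).exists_continuousOn_exp_eq hφ hφ0
  obtain ⟨Lv, hLv, hvexp⟩ := (convex_closedBall c r).exists_continuousOn_exp_eq hv hv0
  set P : ℂ → ℂ := fun ξ => (ξ - c) ^ k * v ξ
  have hP0 : ∀ ξ ∈ sphere c r, P ξ ≠ 0 := fun ξ hξ =>
    norm_pos_iff.1 ((norm_nonneg _).trans_lt (hclose ξ hξ))
  -- `φ / P` stays in the disc `ball 1 1`, where the principal logarithm is continuous
  have hratio : ∀ ξ ∈ sphere c r, φ ξ / P ξ ∈ slitPlane := by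
    intro ξ hξ
    apply ball_one_subset_slitPlane
    rw [mem_ball, dist_eq, div_sub_one (hP0 ξ hξ), norm_div,
      div_lt_one (norm_pos_iff.2 (hP0 ξ hξ))]
    exact hclose ξ hξ
  have hPc : ContinuousOn P (sphere c r) :=
    (continuous_id.sub continuous_const).pow k |>.continuousOn.mul (hv.mono hsub)
  refine not_forall_exp_eq_sub_pow_on_sphere c hr hk
    (H := fun ξ => Lφ ξ - log (φ ξ / P ξ) - Lv ξ) ?_ fun ξ hξ => ?_
  · exact ((hLφ.mono hsub).sub (((hφ.mono hsub).div hPc hP0).clog hratio)).sub (hLv.mono hsub)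
  · rw [exp_sub, exp_sub, hφexp ξ (hsub hξ), hvexp ξ (hsub hξ),
      exp_log (div_ne_zero (hφ0 ξ (hsub hξ)) (hP0 ξ hξ))]
    field_simp [hφ0 ξ (hsub hξ), hv0 ξ (hsub hξ), hP0 ξ hξ]
    exact mul_comm _ _

theorem AnalyticAt.exists_closedBall_eq_pow_mul {𝕜 : Type*} [NontriviallyNormedField 𝕜]
    [CompleteSpace 𝕜] {f : 𝕜 → 𝕜} {c : 𝕜} (hf : AnalyticAt 𝕜 f c) (hfc : f c = 0)
    (hnz : ¬ ∀ᶠ z in 𝓝 c, f z = 0) :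
    ∃ k ≠ 0, ∃ r > 0, ∃ v : 𝕜 → 𝕜, ContinuousOn v (closedBall c r) ∧
      (∀ ξ ∈ closedBall c r, v ξ ≠ 0) ∧ ∀ ξ ∈ closedBall c r, f ξ = (ξ - c) ^ k * v ξ := by
  obtain ⟨k, v, hv, hvc, hfv⟩ := hf.exists_eventuallyEq_pow_smul_nonzero_iff.2 hnz
  have hk : k ≠ 0 := by
    rintro rfl
    exact hvc (by simpa [hfc] using hfv.self_of_nhds.symm)
  obtain ⟨r, hr, hball⟩ := nhds_basis_closedBall.eventually_iff.1
    (hfv.and (hv.eventually_analyticAt.and (hv.continuousAt.eventually_ne hvc)))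
  exact ⟨k, hk, r, hr, v, fun ξ hξ => (hball hξ).2.1.continuousAt.continuousWithinAt,
    fun ξ hξ => (hball hξ).2.2, fun ξ hξ => (hball hξ).1⟩

theorem TendstoUniformlyOn.eventually_norm_sub_lt {α E ι : Type*} [TopologicalSpace α]
    [NormedAddCommGroup E] {F : ι → α → E} {f : α → E} {p : Filter ι} {K : Set α}
    (hF : TendstoUniformlyOn F f p K) (hK : IsCompact K) (hf : ContinuousOn f K)
    (hf0 : ∀ x ∈ K, f x ≠ 0) : ∀ᶠ n in p, ∀ x ∈ K, ‖F n x - f x‖ < ‖f x‖ := by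
  rcases K.eq_empty_or_nonempty with rfl | hne
  · simp
  obtain ⟨x₀, hx₀, hmin⟩ := hK.exists_isMinOn hne hf.norm
  filter_upwards [Metric.tendstoUniformlyOn_iff.1 hF _ (norm_pos_iff.2 (hf0 x₀ hx₀))]
    with n hn x hx
  rw [← dist_eq_norm, dist_comm]
  exact (hn x hx).trans_le (hmin hx)

theorem TendstoLocallyUniformly.eventually_mapsTo {α γ ι : Type*} [UniformSpace α]
    [TopologicalSpace γ] {w : ι → γ → α} {x₀ : α} {p : Filter ι}
    (hw : TendstoLocallyUniformly w (fun _ => x₀) p) {K : Set γ} (hK : IsCompact K)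
    {U : Set α} (hU : U ∈ 𝓝 x₀) : ∀ᶠ n in p, MapsTo (w n) K U := by
  have := (tendstoLocallyUniformlyOn_iff_tendstoUniformlyOn_of_compact hK).1
    (hw.tendstoLocallyUniformlyOn (s := K))
  filter_upwards [this _ (mem_nhds_uniformity_iff_right.1 hU)] with n hn x hx
  exact hn x hx rfl

theorem TendstoLocallyUniformlyOn.comp_tendstoLocallyUniformly_const {α β γ ι : Type*}
    [UniformSpace α] [UniformSpace β] [TopologicalSpace γ] {F : ι → α → β} {f : α → β}
    {p : Filter ι} {s : Set α} {x₀ : α} (hF : TendstoLocallyUniformlyOn F f p s) (hs : s ∈ 𝓝 x₀)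
    (hf : ContinuousAt f x₀) {w : ι → γ → α} (hw : TendstoLocallyUniformly w (fun _ => x₀) p) :
    TendstoLocallyUniformly (fun n y => F n (w n y)) (fun _ => f x₀) p := by
  rw [tendstoLocallyUniformly_iff_forall_tendsto] at hw ⊢
  intro y
  have hwy : Tendsto (fun q : ι × γ => w q.1 q.2) (p ×ˢ 𝓝 y) (𝓝 x₀) :=
    Uniform.tendsto_nhds_right.2 (hw y)
  have hlift : Tendsto (fun q : ι × γ => (q.1, w q.1 q.2)) (p ×ˢ 𝓝 y) (p ×ˢ 𝓝[s] x₀) := by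
    rw [nhdsWithin_eq_nhds.2 hs]
    exact tendsto_fst.prodMk hwy
  exact (Uniform.tendsto_nhds_right.1 (hf.tendsto.comp hwy)).uniformity_trans
    ((tendstoLocallyUniformlyOn_iff_forall_tendsto.1 hF x₀ (mem_of_mem_nhds hs)).comp hlift)

theorem tendstoLocallyUniformly_add_mul {ι : Type*} {p : Filter ι} {z ρ : ι → ℂ} {z₀ : ℂ}
    (hz : Tendsto z p (𝓝 z₀)) (hρ : Tendsto ρ p (𝓝 0)) :
    TendstoLocallyUniformly (fun n ξ => z n + ρ n * ξ) (fun _ => z₀) p := by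
  rw [tendstoLocallyUniformly_iff_forall_tendsto]
  intro ξ
  refine Uniform.tendsto_nhds_right.1 ?_
  simpa using (hz.comp tendsto_fst).add ((hρ.comp tendsto_fst).mul (tendsto_snd (f := p)))

theorem avoidance_rescaling_lemma_general
    (D : Set ℂ) (hD : IsOpen D)
    (fseq : ℕ → ℂ → ℂ) (f : ℂ → ℂ)
    (hfc : ∀ n, ContinuousOn (fseq n) D)
    (hconv : TendstoLocallyUniformlyOn fseq f atTop D)
    (z : ℕ → ℂ)
    (z₀ : ℂ) (hz₀ : z₀ ∈ D) (hz : Tendsto z atTop (𝓝 z₀))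
    (ρ : ℕ → ℝ) (hρ : Tendsto ρ atTop (𝓝 0))
    (gseq : ℕ → ℂ → ℂ) (hg : ∀ n, DifferentiableOn ℂ (gseq n) D)
    (g : ℂ → ℂ) (hgent : Differentiable ℂ g)
    (hgnc : ¬ ∃ c : ℂ, ∀ ξ : ℂ, g ξ = c)
    (hresc : TendstoLocallyUniformly
      (fun n ξ => gseq n (z n + (ρ n : ℂ) * ξ)) g atTop)
    (havoid : ∀ n, ∀ w ∈ D, gseq n w ≠ fseq n w) :
    ∀ ξ : ℂ, g ξ ≠ f z₀ := by
  intro ξ₀ hξ₀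
  have hD₀ : D ∈ 𝓝 z₀ := hD.mem_nhds hz₀
  have hw : TendstoLocallyUniformly (fun n ξ => z n + (ρ n : ℂ) * ξ) (fun _ => z₀) atTop :=
    tendstoLocallyUniformly_add_mul hz
      (by rw [← ofReal_zero]; exact (continuous_ofReal.tendsto 0).comp hρ)
  have hfw := hconv.comp_tendstoLocallyUniformly_const hD₀
    ((hconv.continuousOn (.of_forall hfc)).continuousAt hD₀) hw
  have hnc : ¬ ∀ᶠ ξ in 𝓝 ξ₀, g ξ - f z₀ = 0 := fun h => hgnc ⟨f z₀, congrFun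
    (analyticOnNhd_univ_iff_differentiable.2 hgent |>.eq_of_eventuallyEq analyticOnNhd_const
      (h.mono fun _ => sub_eq_zero.1))⟩
  obtain ⟨k, hk, r, hr, v, hv, hv0, hfac⟩ :=
    ((hgent.analyticAt ξ₀).fun_sub analyticAt_const).exists_closedBall_eq_pow_mul
      (sub_eq_zero.2 hξ₀) hnc
  have hsphere := isCompact_sphere ξ₀ r
  have hΨ0 : ∀ ξ ∈ sphere ξ₀ r, g ξ - f z₀ ≠ 0 := fun ξ hξ => by
    rw [hfac ξ (sphere_subset_closedBall hξ)]
    exact mul_ne_zero (pow_ne_zero _ (sub_ne_zero.2 (ne_of_mem_sphere hξ hr.ne')))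
      (hv0 ξ (sphere_subset_closedBall hξ))
  have hmaps := hw.eventually_mapsTo (isCompact_closedBall ξ₀ r) hD₀
  have hnear := (((tendstoLocallyUniformly_iff_forall_isCompact.1 hresc) _ hsphere).sub
    ((tendstoLocallyUniformly_iff_forall_isCompact.1 hfw) _ hsphere)).eventually_norm_sub_lt
    hsphere (hgent.continuous.sub continuous_const).continuousOn hΨ0
  obtain ⟨n, hnD, hnclose⟩ := (hmaps.and hnear).exists
  obtain ⟨ξ, hξ, hzero⟩ := exists_zero_of_norm_sub_lt_pow_mul hr hk hv hv0
    (((hg n).continuousOn.comp (by fun_prop) hnD).sub ((hfc n).comp (by fun_prop) hnD))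
    fun ξ hξ => hfac ξ (sphere_subset_closedBall hξ) ▸ hnclose ξ hξ
  exact havoid n _ (hnD hξ) (sub_eq_zero.1 hzero)

/-- Lappan's avoidance rescaling lemma, holomorphic version: if continuous `fₙ → f` locally
uniformly on an open set `D`, `zₙ → z₀ ∈ D`, `ρₙ → 0⁺`, the holomorphic `gₙ` avoid the `fₙ`
on `D`, and the rescalings `ξ ↦ gₙ(zₙ + ρₙ ξ)` converge locally uniformly on `ℂ` to a
nonconstant entire function `g`, then `g` omits the value `f(z₀)`. -/
theorem avoidance_rescaling_lemma
    (D : Set ℂ) (hD : IsOpen D)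
    (fseq : ℕ → ℂ → ℂ) (f : ℂ → ℂ)
    (hfc : ∀ n, ContinuousOn (fseq n) D)
    (hconv : TendstoLocallyUniformlyOn fseq f atTop D)
    (z : ℕ → ℂ) (hzD : ∀ n, z n ∈ D)
    (z₀ : ℂ) (hz₀ : z₀ ∈ D) (hz : Tendsto z atTop (𝓝 z₀))
    (ρ : ℕ → ℝ) (hρpos : ∀ n, 0 < ρ n) (hρ : Tendsto ρ atTop (𝓝 0))
    (gseq : ℕ → ℂ → ℂ) (hg : ∀ n, DifferentiableOn ℂ (gseq n) D)
    (g : ℂ → ℂ) (hgent : Differentiable ℂ g)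
    (hgnc : ¬ ∃ c : ℂ, ∀ ξ : ℂ, g ξ = c)
    (hresc : TendstoLocallyUniformly
      (fun n ξ => gseq n (z n + (ρ n : ℂ) * ξ)) g atTop)
    (havoid : ∀ n, ∀ w ∈ D, gseq n w ≠ fseq n w) :
    ∀ ξ : ℂ, g ξ ≠ f z₀ :=
  avoidance_rescaling_lemma_general D hD fseq f hfc hconv z z₀ hz₀ hz ρ hρ gseq hg g hgent hgnc
    hresc havoid
end

section
/- Let D ⊆ ℂ be open and connected, let (fₘ) be a sequence of holomorphic functions on D converging locally uniformly to a holomorphic function f, and suppose each fₘ omits the value a ∈ ℂ (i.e. fₘ(z) ≠ a for all z ∈ D). Then either f is constant (possibly the constant a) or f(z) ≠ a for all z ∈ D. -/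
open Filter Topology

/-- Hurwitz-type theorem: if holomorphic functions `fₘ` on an open connected set `D` all
omit the value `a` and converge locally uniformly to (the holomorphic) `f`, then either `f`
is constant on `D` or `f` also omits `a` on `D`. -/
theorem hurwitz_omitted_value
    (D : Set ℂ) (hD : IsOpen D) (hDc : IsConnected D)
    (fseq : ℕ → ℂ → ℂ) (f : ℂ → ℂ)
    (hfm : ∀ m, DifferentiableOn ℂ (fseq m) D)
    (hf : DifferentiableOn ℂ f D)
    (hconv : TendstoLocallyUniformlyOn fseq f atTop D)
    (a : ℂ) (homit : ∀ m, ∀ z ∈ D, fseq m z ≠ a) :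
    (∃ c : ℂ, ∀ z ∈ D, f z = c) ∨ (∀ z ∈ D, f z ≠ a) := by
  by_cases hca : ∀ z ∈ D, f z = a
  · exact Or.inl ⟨a, hca⟩
  push_neg at hca
  obtain ⟨z₁, hz₁D, hz₁⟩ := hca
  right
  intro z₀ hz₀ hfz₀
  -- the function `f - a` is analytic on `D`
  have hg : AnalyticOnNhd ℂ (fun z => f z - a) D :=
    (hf.sub (differentiableOn_const a)).analyticOnNhd hD
  -- `f - a` is eventually nonzero near `z₀` (isolated zeros)
  have hev : ∀ᶠ z in 𝓝[≠] z₀, f z - a ≠ 0 := by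
    rw [← Filter.not_frequently]
    intro h
    have h2 := hg.eqOn_zero_of_preconnected_of_frequently_eq_zero
      hDc.isPreconnected hz₀ h hz₁D
    exact hz₁ (sub_eq_zero.mp h2)
  rw [eventually_nhdsWithin_iff, Metric.eventually_nhds_iff] at hev
  obtain ⟨ε, hε, hev⟩ := hev
  obtain ⟨ε₂, hε₂, hball⟩ := Metric.isOpen_iff.mp hD z₀ hz₀
  set r : ℝ := min ε ε₂ / 2 with hr_def
  have hr : 0 < r := by positivity
  have hcb : Metric.closedBall z₀ r ⊆ D := by
    intro z hz
    apply hball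
    rw [Metric.mem_closedBall] at hz
    rw [Metric.mem_ball]
    calc dist z z₀ ≤ r := hz
      _ < ε₂ := by
        rw [hr_def]
        have := min_le_right ε ε₂
        linarith
  have hcb_ne : ∀ z ∈ Metric.closedBall z₀ r, z ≠ z₀ → f z - a ≠ 0 := by
    intro z hz hzz
    apply hev
    · rw [Metric.mem_closedBall] at hz
      calc dist z z₀ ≤ r := hz
        _ < ε := by
          rw [hr_def]
          have := min_le_left ε ε₂
          linarith
    · exact hzz
  -- minimum of ‖f - a‖ on the sphere
  have hsph_compact : IsCompact (Metric.sphere z₀ r) := isCompact_sphere z₀ r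
  have hsph_sub : Metric.sphere z₀ r ⊆ D := Metric.sphere_subset_closedBall.trans hcb
  have hsph_ne : (Metric.sphere z₀ r).Nonempty :=
    NormedSpace.sphere_nonempty.mpr hr.le
  have hcont : ContinuousOn (fun z => ‖f z - a‖) (Metric.sphere z₀ r) :=
    ((hf.continuousOn.mono hsph_sub).sub continuousOn_const).norm
  obtain ⟨w, hw, hwmin⟩ := hsph_compact.exists_isMinOn hsph_ne hcont
  set δ : ℝ := ‖f w - a‖ with hδ_def
  have hδ : 0 < δ := by
    rw [hδ_def, norm_pos_iff]
    apply hcb_ne w (Metric.sphere_subset_closedBall hw)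
    intro hwz
    have : dist w z₀ = r := hw
    rw [hwz, dist_self] at this
    exact hr.ne this
  -- pick a good index m
  have hUnif : TendstoUniformlyOn fseq f atTop (Metric.sphere z₀ r) :=
    (tendstoLocallyUniformlyOn_iff_tendstoUniformlyOn_of_compact hsph_compact).mp
      (hconv.mono hsph_sub)
  have h1 : ∀ᶠ m in atTop, ∀ z ∈ Metric.sphere z₀ r, dist (f z) (fseq m z) < δ / 2 :=
    Metric.tendstoUniformlyOn_iff.mp hUnif (δ / 2) (by positivity)
  have h2 : ∀ᶠ m in atTop, dist (fseq m z₀) a < δ / 2 := by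
    have : Filter.Tendsto (fun m => fseq m z₀) atTop (𝓝 (f z₀)) := by
      have h := (tendstoLocallyUniformlyOn_iff_tendstoUniformlyOn_of_compact
        (isCompact_singleton (x := z₀))).mp
        (hconv.mono (by simpa using hz₀))
      exact h.tendsto_at rfl
    rw [hfz₀] at this
    exact (Metric.tendsto_nhds.mp this) (δ / 2) (by positivity)
  obtain ⟨m, hm1, hm2⟩ := (h1.and h2).exists
  -- on the sphere, ‖fseq m z - a‖ ≥ δ/2
  have hsph_bound : ∀ z ∈ Metric.sphere z₀ r, δ / 2 ≤ ‖fseq m z - a‖ := by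
    intro z hz
    have hfa : δ ≤ ‖f z - a‖ := hwmin hz
    have hd := hm1 z hz
    rw [dist_eq_norm] at hd
    have htri : ‖f z - a‖ ≤ ‖f z - fseq m z‖ + ‖fseq m z - a‖ := by
      calc ‖f z - a‖ = ‖(f z - fseq m z) + (fseq m z - a)‖ := by ring_nf
        _ ≤ ‖f z - fseq m z‖ + ‖fseq m z - a‖ := norm_add_le _ _
    linarith
  -- maximum modulus principle for the inverse
  set g : ℂ → ℂ := fun z => (fseq m z - a)⁻¹ with hg_def
  have hgdiff : DifferentiableOn ℂ g D :=
    ((hfm m).sub (differentiableOn_const a)).inv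
      fun z hz => sub_ne_zero.mpr (homit m z hz)
  have hdcc : DiffContOnCl ℂ g (Metric.ball z₀ r) := by
    apply DifferentiableOn.diffContOnCl
    rw [closure_ball z₀ hr.ne']
    exact hgdiff.mono hcb
  have hfront : ∀ z ∈ frontier (Metric.ball z₀ r), ‖g z‖ ≤ (δ / 2)⁻¹ := by
    intro z hz
    rw [frontier_ball z₀ hr.ne'] at hz
    rw [hg_def]
    simp only [norm_inv]
    exact inv_anti₀ (by positivity) (hsph_bound z hz)
  have hmax : ‖g z₀‖ ≤ (δ / 2)⁻¹ :=
    Complex.norm_le_of_forall_mem_frontier_norm_le Metric.isBounded_ball hdcc hfront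
      (subset_closure (Metric.mem_ball_self hr))
  -- contradiction
  have hne : fseq m z₀ - a ≠ 0 := sub_ne_zero.mpr (homit m z₀ hz₀)
  rw [hg_def] at hmax
  simp only [norm_inv] at hmax
  have hpos : 0 < ‖fseq m z₀ - a‖ := norm_pos_iff.mpr hne
  have : δ / 2 ≤ ‖fseq m z₀ - a‖ := by
    have h2 : (0:ℝ) < δ/2 := by positivity
    rw [← inv_inv ‖fseq m z₀ - a‖]
    exact (le_inv_comm₀ h2 (inv_pos.mpr hpos)).mpr hmax
  rw [dist_eq_norm] at hm2
  linarith
end
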